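/- arXiv:2506.23037 — 7 statements merged into one kernel-verified Lean document; each statement's English description precedes it below -/
import Mathlib

section
/- Let F be a field with char F ≠ 2 and let n ≥ 1. Then the queer associative superalgebra Q(n) admits no superinvolution: there is no F-linear, parity-preserving bijection φ: Q(n) → Q(n) with φ ∘ φ = id and φ(xy) = (−1)^{|x||y|} φ(y)φ(x) for all homogeneous x, y ∈ Q(n). -/
/-- The queer associative superalgebra `Q(n)`: the subalgebra of `M_{2n}(F)`
consisting of all block matrices `[[A, B], [B, A]]` with `A, B ∈ M_n(F)`. -/
def queerAlg (F : Type*) [Field F] (n : ℕ) :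
    Subalgebra F (Matrix (Fin n ⊕ Fin n) (Fin n ⊕ Fin n) F) where
  carrier := {M | ∃ A B : Matrix (Fin n) (Fin n) F, M = Matrix.fromBlocks A B B A}
  mul_mem' := by
    rintro M N ⟨A, B, rfl⟩ ⟨A', B', rfl⟩
    refine ⟨A * A' + B * B', A * B' + B * A', ?_⟩
    rw [Matrix.fromBlocks_multiply, add_comm (B * A') (A * B'), add_comm (B * B') (A * A')]
  one_mem' := ⟨1, 0, Matrix.fromBlocks_one.symm⟩
  add_mem' := by
    rintro M N ⟨A, B, rfl⟩ ⟨A', B', rfl⟩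
    exact ⟨A + A', B + B', (Matrix.fromBlocks_add _ _ _ _ _ _ _ _)⟩
  zero_mem' := ⟨0, 0, by simp⟩
  algebraMap_mem' := fun r => ⟨r • 1, 0, by
    rw [Algebra.algebraMap_eq_smul_one, ← Matrix.fromBlocks_one, Matrix.fromBlocks_smul,
      smul_zero]⟩

/-- The parity components of `Q(n)`: the even part consists of the matrices
`[[A, 0], [0, A]]`, the odd part of the matrices `[[0, B], [B, 0]]`. -/
def queerPart (F : Type*) [Field F] (n : ℕ) (i : ZMod 2) :
    Set (Matrix (Fin n ⊕ Fin n) (Fin n ⊕ Fin n) F) :=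
  if i = 0 then {M | ∃ A : Matrix (Fin n) (Fin n) F, M = Matrix.fromBlocks A 0 0 A}
  else {M | ∃ B : Matrix (Fin n) (Fin n) F, M = Matrix.fromBlocks 0 B B 0}

/-!
The odd element `J = [[0, 1], [1, 0]]` is central in `Q(n)` and `J * J = 1`. Since a
superinvolution `φ` reverses a product of homogeneous elements with the same sign in either
order, `φ J` again commutes with the even part `M_n(F)`, so `φ J = c • J` for a scalar `c`,
and `φ² = id` forces `c² = 1`. As `φ 1 = 1`, this gives
`1 = φ (J * J) = -(φ J)² = -c² = -1`.
-/

structure IsSuperinvolution {F A : Type*} [CommRing F] [Ring A] [Algebra F A]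
    (part : ZMod 2 → Set A) (φ : A →ₗ[F] A) : Prop where
  involutive : ∀ x, φ (φ x) = x
  mapsTo : ∀ i x, x ∈ part i → φ x ∈ part i
  map_mul : ∀ i j x y, x ∈ part i → y ∈ part j →
    φ (x * y) = (-1 : F) ^ (i.val * j.val) • (φ y * φ x)

namespace IsSuperinvolution

variable {F A : Type*} [CommRing F] [Ring A] [Algebra F A]
  {part : ZMod 2 → Set A} {φ : A →ₗ[F] A}

theorem map_one (hφ : IsSuperinvolution part φ) (h1 : (1 : A) ∈ part 0) : φ 1 = 1 := by
  have h := hφ.map_mul 0 0 1 (φ 1) h1 (hφ.mapsTo 0 1 h1)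
  rwa [one_mul, hφ.involutive, ZMod.val_zero, mul_zero, pow_zero, one_smul, one_mul,
    eq_comm] at h

theorem commute_map (hφ : IsSuperinvolution part φ) {i j : ZMod 2} {z : A} (hz : z ∈ part i)
    (hcomm : ∀ w ∈ part j, Commute z w) {w : A} (hw : w ∈ part j) : Commute (φ z) w := by
  have hw' := hφ.mapsTo j w hw
  have h := congrArg φ (hcomm _ hw').eq
  rw [hφ.map_mul i j _ _ hz hw', hφ.map_mul j i _ _ hw' hz, hφ.involutive, mul_comm j.val] at h
  exact ((isUnit_neg_one.pow _).smul_left_cancel.mp h).symm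

theorem two_eq_zero (hφ : IsSuperinvolution part φ) (h1 : (1 : A) ∈ part 0) {J : A}
    (hJ : J ∈ part 1) (hJJ : J * J = 1) {c : F} (hφJ : φ J = c • J) : (2 : A) = 0 := by
  have hc : (c * c) • (1 : A) = 1 := by
    have h := hφ.involutive J
    rw [hφJ, map_smul, hφJ, smul_smul] at h
    rw [← hJJ, ← smul_mul_assoc, h]
  have hneg : φ 1 = -1 := by
    have h := hφ.map_mul 1 1 J J hJ hJ
    rwa [hJJ, hφJ, smul_mul_smul_comm, hJJ, hc, ZMod.val_one, pow_one, neg_one_smul] at h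
  rw [hφ.map_one h1] at hneg
  rw [← one_add_one_eq_two]
  nth_rewrite 2 [hneg]
  exact add_neg_cancel 1

end IsSuperinvolution

section Queer

variable {F : Type*} [Field F] {n : ℕ}

theorem queerPart_zero :
    queerPart F n 0 = {M | ∃ A : Matrix (Fin n) (Fin n) F, M = Matrix.fromBlocks A 0 0 A} :=
  if_pos rfl

theorem queerPart_one :
    queerPart F n 1 = {M | ∃ B : Matrix (Fin n) (Fin n) F, M = Matrix.fromBlocks 0 B B 0} :=
  if_neg one_ne_zero

theorem one_mem_queerPart_zero :
    (1 : Matrix (Fin n ⊕ Fin n) (Fin n ⊕ Fin n) F) ∈ queerPart F n 0 := by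
  rw [queerPart_zero]
  exact ⟨1, Matrix.fromBlocks_one.symm⟩

variable (F n) in
def queerJ : queerAlg F n := ⟨Matrix.fromBlocks 0 1 1 0, 0, 1, rfl⟩

theorem coe_queerJ :
    (queerJ F n : Matrix (Fin n ⊕ Fin n) (Fin n ⊕ Fin n) F) = Matrix.fromBlocks 0 1 1 0 :=
  rfl

theorem queerJ_mem_queerPart_one :
    (queerJ F n : Matrix (Fin n ⊕ Fin n) (Fin n ⊕ Fin n) F) ∈ queerPart F n 1 := by
  rw [queerPart_one]
  exact ⟨1, rfl⟩

theorem queerJ_mul_self : queerJ F n * queerJ F n = 1 := by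
  ext1
  simp [coe_queerJ, Matrix.fromBlocks_multiply, Matrix.fromBlocks_one]

theorem commute_queerJ (x : queerAlg F n) : Commute (queerJ F n) x := by
  obtain ⟨A, B, hx⟩ := x.2
  ext1
  simp [coe_queerJ, hx, Matrix.fromBlocks_multiply]

theorem exists_eq_smul_queerJ {x : queerAlg F n}
    (hx : (x : Matrix (Fin n ⊕ Fin n) (Fin n ⊕ Fin n) F) ∈ queerPart F n 1)
    (hcomm : ∀ y : queerAlg F n,
      (y : Matrix (Fin n ⊕ Fin n) (Fin n ⊕ Fin n) F) ∈ queerPart F n 0 → Commute x y) :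
    ∃ c : F, x = c • queerJ F n := by
  rw [queerPart_one] at hx
  obtain ⟨C, hC⟩ := hx
  have hC_comm (A : Matrix (Fin n) (Fin n) F) : A * C = C * A := by
    have h := congrArg
      (fun y : queerAlg F n => (y : Matrix (Fin n ⊕ Fin n) (Fin n ⊕ Fin n) F).toBlocks₁₂)
      (hcomm ⟨_, A, 0, rfl⟩ (by rw [queerPart_zero]; exact ⟨A, rfl⟩)).eq
    simpa [hC, Matrix.fromBlocks_multiply] using h.symm
  obtain ⟨c, rfl⟩ := Matrix.mem_range_scalar_of_commute_single fun i j _ => hC_comm _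
  refine ⟨c, Subtype.ext ?_⟩
  simp [hC, coe_queerJ, Matrix.fromBlocks_smul, Matrix.smul_one_eq_diagonal]

end Queer

set_option synthInstance.maxHeartbeats 1000000 in
/-- Let `F` be a field with `char F ≠ 2` and `n ≥ 1`. Then the queer
associative superalgebra `Q(n)` admits no superinvolution: there is no `F`-linear,
parity-preserving bijection `φ : Q(n) → Q(n)` with `φ ∘ φ = id` and
`φ(xy) = (−1)^{|x||y|} φ(y)φ(x)` for all homogeneous `x, y ∈ Q(n)`. -/
theorem stmt_3 {F : Type*} [Field F] (h2 : (2 : F) ≠ 0) (n : ℕ) (hn : 1 ≤ n) :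
    ¬ ∃ φ : queerAlg F n →ₗ[F] queerAlg F n,
      Function.Bijective φ ∧
      (∀ x : queerAlg F n, φ (φ x) = x) ∧
      (∀ (i : ZMod 2) (x : queerAlg F n),
        (x : Matrix (Fin n ⊕ Fin n) (Fin n ⊕ Fin n) F) ∈ queerPart F n i →
        ((φ x : queerAlg F n) : Matrix (Fin n ⊕ Fin n) (Fin n ⊕ Fin n) F) ∈ queerPart F n i) ∧
      (∀ (i j : ZMod 2) (x y : queerAlg F n),
        (x : Matrix (Fin n ⊕ Fin n) (Fin n ⊕ Fin n) F) ∈ queerPart F n i →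
        (y : Matrix (Fin n ⊕ Fin n) (Fin n ⊕ Fin n) F) ∈ queerPart F n j →
        φ (x * y) = (-1 : F) ^ (i.val * j.val) • (φ y * φ x)) := by
  rintro ⟨φ, -, hinv, hpar, hmul⟩
  have hφ : IsSuperinvolution (fun i => Subtype.val ⁻¹' queerPart F n i) φ :=
    ⟨hinv, hpar, hmul⟩
  obtain ⟨c, hc⟩ := exists_eq_smul_queerJ (hφ.mapsTo 1 _ queerJ_mem_queerPart_one)
    fun y hy => hφ.commute_map (i := 1) (j := 0) queerJ_mem_queerPart_one
      (fun w _ => commute_queerJ w) hy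
  have h2Q := hφ.two_eq_zero one_mem_queerPart_zero queerJ_mem_queerPart_one queerJ_mul_self hc
  have : Nonempty (Fin n) := ⟨⟨0, hn⟩⟩
  exact h2 <| (algebraMap F (queerAlg F n)).injective <| by rwa [map_ofNat, map_zero]
end

section
/- Let G be an abelian group, let F be an algebraically closed field with char F ≠ 2, and let D be a finite-dimensional G-graded-division superalgebra over F. Then sZ(D) = Z(D) ∩ D⁰; in particular, the supercenter of D contains no nonzero odd elements. -/
/-! An odd supercentral element `b` anticommutes with each of its homogeneous components `u`;
comparing components of degree `2 • deg u` in `b u + u b = 0` gives `2 u² = 0`, so `u² = 0`, and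
`u`, being homogeneous in a graded-division algebra, must vanish. Hence `sZ(D)¹ = 0`, while an
even supercentral element commutes with every homogeneous element and so lies in `Z(D)`. -/

/-- The component `sZ(R)^i` of the supercenter of a `G × ℤ/2`-graded algebra `R`. -/
def superCenterComp {G F R : Type*} [AddCommGroup G] [Field F] [Ring R] [Algebra F R]
    (𝒜 : G × ZMod 2 → Submodule F R) (i : ZMod 2) : Set R :=
  {c | c ∈ (⨆ g : G, 𝒜 (g, i)) ∧
    ∀ (j : ZMod 2), ∀ r ∈ (⨆ g : G, 𝒜 (g, j)),
      c * r = (-1 : R) ^ (i.val * j.val) * (r * c)}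

namespace DirectSum

section Decomposition

variable {ι R M : Type*} [DecidableEq ι] [Semiring R] [AddCommMonoid M] [Module R M]
  (ℳ : ι → Submodule R M) [Decomposition ℳ]

theorem eq_zero_of_forall_decompose_eq_zero {x : M} (h : ∀ i, decompose ℳ x i = 0) : x = 0 :=
  (decomposeAddEquiv ℳ).map_eq_zero_iff.mp (DirectSum.ext h)

theorem decompose_eq_zero_of_mem_iSup_comp {κ : Type*} {f : κ → ι} {x : M}
    (hx : x ∈ ⨆ k, ℳ (f k)) {i : ι} (hi : i ∉ Set.range f) : decompose ℳ x i = 0 := by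
  induction hx using Submodule.iSup_induction' with
  | mem k y hy => exact Subtype.ext (decompose_of_mem_ne ℳ hy fun h => hi ⟨k, h⟩)
  | zero => rw [decompose_zero, zero_apply]
  | add y z _ _ hy hz => rw [decompose_add, add_apply, hy, hz, add_zero]

end Decomposition

section GradedRing

variable {ι A σ : Type*} [DecidableEq ι] [Semiring A] [SetLike σ A] [AddSubmonoidClass σ A]
  (𝒜 : ι → σ)

theorem decompose_mul_add_mul_eq_zero_of_mem [AddCancelMonoid ι] [GradedRing 𝒜] {c u : A}
    {i : ι} (hu : u ∈ 𝒜 i) (h : c * u + u * c = 0) :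
    (decompose 𝒜 c i : A) * u + u * decompose 𝒜 c i = 0 := by
  have := congrArg (fun x => (decompose 𝒜 x (i + i) : A)) h
  simpa only [decompose_add, add_apply, AddMemClass.coe_add, decompose_zero, zero_apply,
    ZeroMemClass.coe_zero, coe_decompose_mul_add_of_right_mem 𝒜 hu,
    coe_decompose_mul_add_of_left_mem 𝒜 hu] using this

theorem commute_of_forall_mem_commute [AddMonoid ι] [GradedRing 𝒜] {a : A}
    (h : ∀ i, ∀ x ∈ 𝒜 i, Commute a x) (x : A) : Commute a x := by
  induction x using Decomposition.inductionOn 𝒜 with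
  | zero => exact Commute.zero_right a
  | homogeneous m => exact h _ m m.2
  | add x y hx hy => exact hx.add_right hy

end GradedRing

end DirectSum

section SuperCenter

variable {G F D : Type*} [AddCommGroup G] [Field F] [Ring D] [Algebra F D]
  {𝒜 : G × ZMod 2 → Submodule F D}

theorem zero_mem_superCenterComp (i : ZMod 2) : (0 : D) ∈ superCenterComp 𝒜 i :=
  ⟨zero_mem _, fun _ _ _ => by simp⟩

variable [DecidableEq G] [GradedAlgebra 𝒜]

open DirectSum

theorem mem_superCenterComp_zero_iff {a : D} :
    a ∈ superCenterComp 𝒜 0 ↔ a ∈ Subring.center D ∧ a ∈ ⨆ g : G, 𝒜 (g, 0) := by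
  simp only [superCenterComp, Set.mem_ofPred_eq, ZMod.val_zero, zero_mul, pow_zero, one_mul,
    Subring.mem_center_iff]
  refine ⟨fun ⟨ha, hcomm⟩ => ⟨fun x => ?_, ha⟩,
    fun ⟨hcenter, ha⟩ => ⟨ha, fun _ r _ => (hcenter r).symm⟩⟩
  refine (commute_of_forall_mem_commute 𝒜 (fun ⟨g, j⟩ r hr => ?_) x).eq.symm
  exact hcomm j r (Submodule.mem_iSup_of_mem g hr)

theorem eq_zero_of_mem_superCenterComp_one (h2 : (2 : F) ≠ 0)
    (hdiv : ∀ gi : G × ZMod 2, ∀ d ∈ 𝒜 gi, d ≠ 0 → IsUnit d)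
    {b : D} (hb : b ∈ superCenterComp 𝒜 1) : b = 0 := by
  obtain ⟨hb_odd, hb_anticomm⟩ := hb
  refine eq_zero_of_forall_decompose_eq_zero 𝒜 fun ⟨g, k⟩ => ?_
  fin_cases k
  · exact decompose_eq_zero_of_mem_iSup_comp 𝒜 hb_odd
      fun ⟨_, h⟩ => one_ne_zero (congrArg Prod.snd h)
  set u := decompose 𝒜 b (g, 1)
  have hu_odd : (u : D) ∈ ⨆ g' : G, 𝒜 (g', 1) := Submodule.mem_iSup_of_mem g u.2
  have hbu : b * u + u * b = 0 := by
    rw [hb_anticomm 1 u hu_odd, show (1 : ZMod 2).val * (1 : ZMod 2).val = 1 from rfl, pow_one,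
      neg_one_mul, neg_add_cancel]
  have h2u : (2 : F) • ((u : D) * u) = 0 := by
    rw [two_smul]
    exact decompose_mul_add_mul_eq_zero_of_mem 𝒜 u.2 hbu
  have hsq : (u : D) * u = 0 := (smul_eq_zero.mp h2u).resolve_left h2
  rw [← ZeroMemClass.coe_eq_zero]
  by_contra hu
  exact hu ((hdiv _ u u.2 hu).mul_right_eq_zero.mp hsq)

end SuperCenter

theorem stmt_4_general {G F D : Type*} [AddCommGroup G] [DecidableEq G]
    [Field F] (h2 : (2 : F) ≠ 0)
    [Ring D] [Algebra F D]
    (𝒜 : G × ZMod 2 → Submodule F D) [GradedAlgebra 𝒜]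
    (hdiv : ∀ gi : G × ZMod 2, ∀ d ∈ 𝒜 gi, d ≠ 0 → IsUnit d) :
    {c : D | ∃ a ∈ superCenterComp 𝒜 0, ∃ b ∈ superCenterComp 𝒜 1, c = a + b} =
      {c : D | c ∈ Subring.center D ∧ c ∈ (⨆ g : G, 𝒜 (g, 0))} := by
  ext c
  constructor
  · rintro ⟨a, ha, b, hb, rfl⟩
    rw [eq_zero_of_mem_superCenterComp_one h2 hdiv hb, add_zero]
    exact mem_superCenterComp_zero_iff.mp ha
  · intro hc
    exact ⟨c, mem_superCenterComp_zero_iff.mpr hc, 0, zero_mem_superCenterComp 1,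
      (add_zero c).symm⟩

/-- Let `G` be an abelian group, `F` an algebraically closed field
with `char F ≠ 2`, and `D` a finite-dimensional `G`-graded-division superalgebra
over `F`. Then `sZ(D) = Z(D) ∩ D⁰`; in particular the supercenter of `D` contains
no nonzero odd elements. -/
theorem stmt_4 {G F D : Type*} [AddCommGroup G] [DecidableEq G]
    [Field F] [IsAlgClosed F] (h2 : (2 : F) ≠ 0)
    [Ring D] [Algebra F D] [FiniteDimensional F D]
    (𝒜 : G × ZMod 2 → Submodule F D) [GradedAlgebra 𝒜]
    (hdiv : ∀ gi : G × ZMod 2, ∀ d ∈ 𝒜 gi, d ≠ 0 → IsUnit d) :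
    {c : D | ∃ a ∈ superCenterComp 𝒜 0, ∃ b ∈ superCenterComp 𝒜 1, c = a + b} =
      {c : D | c ∈ Subring.center D ∧ c ∈ (⨆ g : G, 𝒜 (g, 0))} :=
  stmt_4_general h2 𝒜 hdiv
end

section
/- With notation as in the context: if T⁻ = ∅, then T_p = rad β̃ = rad β = rad β⁺; if T⁻ ≠ ∅, then T_p ∩ T⁺ = (rad β⁺) ∖ (rad β) and T_p ∩ T⁻ = (rad β) ∩ T⁻. -/
/-- The skew-symmetric bicharacter `β̃(t,s) = (−1)^{p(t)p(s)} β(t,s)`. -/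
def btilde {F T : Type*} [Field F] [CommGroup T]
    (β : T → T → Fˣ) (p : T → ZMod 2) : T → T → Fˣ :=
  fun t s => (-1 : Fˣ) ^ ((p t).val * (p s).val) * β t s

/-- The set of parity elements: those `t_p ∈ T` with `β̃(t_p, t) = (−1)^{p(t)}` for all `t`. -/
def paritySet {F T : Type*} [Field F] [CommGroup T]
    (β : T → T → Fˣ) (p : T → ZMod 2) : Set T :=
  {tp | ∀ t, btilde β p tp t = (-1 : Fˣ) ^ (p t).val}

/-- The radical of `β⁺` (the restriction of `β` to `T⁺ × T⁺`), computed inside `T⁺`. -/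
def radPlus {F T : Type*} [Field F] [CommGroup T]
    (β : T → T → Fˣ) (p : T → ZMod 2) : Set T :=
  {t | p t = 0 ∧ ∀ s, p s = 0 → β t s = 1}

/-!
For `t ∈ T⁺` we have `β̃(t, ·) = β(t, ·)`, so `t` is a parity element iff the character
`β(t, ·)` equals the parity character `s ↦ (−1)^{p(s)}`. When `T⁻ ≠ ∅` this happens iff
`β(t, ·)` is trivial on the index-two subgroup `T⁺` but not on `T`: its value `u` at any `s₀`
outside its kernel (necessarily `s₀ ∈ T⁻`) satisfies `u² = 1` and `u ≠ 1`, hence `u = −1`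
since char `F ≠ 2`. For `t ∈ T⁻` we have `β̃(t, s) = (−1)^{p(s)} β(t, s)`, so `t` is a parity
element iff `t ∈ rad β`. When `T⁻ = ∅` all the twists disappear and the four sets coincide.
-/

theorem ZMod.eq_zero_or_eq_one_of_two (a : ZMod 2) : a = 0 ∨ a = 1 := by
  revert a; decide

theorem Units.neg_one_ne_one_of_two_ne_zero {R : Type*} [Ring R] (h2 : (2 : R) ≠ 0) :
    (-1 : Rˣ) ≠ 1 := fun h =>
  h2 <| one_add_one_eq_two (R := R) ▸
    neg_eq_iff_add_eq_zero.mp (by simpa using congrArg Units.val h)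

section ParityCharacter

variable {R T : Type*} [Ring R] [Mul T] {χ : T → Rˣ} {p : T → ZMod 2}

theorem eq_neg_one_pow_val_of_forall_eq_one_of_ne_one [NoZeroDivisors R]
    (hχ : ∀ s s', χ (s * s') = χ s * χ s') (hp : ∀ a b, p (a * b) = p a + p b)
    (hker : ∀ s, p s = 0 → χ s = 1) {s₀ : T} (hs₀ : χ s₀ ≠ 1) (t : T) :
    χ t = (-1) ^ (p t).val := by
  have hps₀ : p s₀ = 1 := (ZMod.eq_zero_or_eq_one_of_two _).resolve_left (mt (hker s₀) hs₀)
  have hχs₀ : χ s₀ = -1 := by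
    have hsq : χ s₀ * χ s₀ = 1 := by
      rw [← hχ]
      exact hker _ (by rw [hp, hps₀]; decide)
    exact ((Units.inv_eq_self_iff _).1 (inv_eq_of_mul_eq_one_left hsq)).resolve_left hs₀
  rcases ZMod.eq_zero_or_eq_one_of_two (p t) with ht | ht
  · simp [ht, hker t ht]
  · have hprod : χ t * χ s₀ = 1 := by
      rw [← hχ]
      exact hker _ (by rw [hp, ht, hps₀]; decide)
    rw [hχs₀, mul_neg_one, neg_eq_iff_eq_neg] at hprod
    simp [ht, hprod, ZMod.val_one]

theorem forall_eq_neg_one_pow_val_iff [NoZeroDivisors R] (h2 : (2 : R) ≠ 0)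
    (hχ : ∀ s s', χ (s * s') = χ s * χ s') (hp : ∀ a b, p (a * b) = p a + p b)
    {t₁ : T} (ht₁ : p t₁ = 1) :
    (∀ t, χ t = (-1) ^ (p t).val) ↔ (∀ s, p s = 0 → χ s = 1) ∧ ¬ ∀ s, χ s = 1 := by
  refine ⟨fun hpar => ⟨fun s hs => by simp [hpar s, hs], fun htriv => ?_⟩, ?_⟩
  · have := hpar t₁
    simp only [htriv t₁, ht₁, ZMod.val_one, pow_one] at this
    exact Units.neg_one_ne_one_of_two_ne_zero h2 this.symm
  · rintro ⟨hker, hnontriv⟩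
    obtain ⟨s₀, hs₀⟩ := not_forall.1 hnontriv
    exact eq_neg_one_pow_val_of_forall_eq_one_of_ne_one hχ hp hker hs₀

end ParityCharacter

section ParityElements

variable {F T : Type*} [Field F] [CommGroup T] {β : T → T → Fˣ} {p : T → ZMod 2} {t : T}

theorem btilde_eq_of_forall_eq_zero (hp : ∀ t, p t = 0) : btilde β p = β := by
  ext t s
  simp [btilde, hp]

theorem mem_paritySet_iff_of_eq_zero (ht : p t = 0) :
    t ∈ paritySet β p ↔ ∀ s, β t s = (-1) ^ (p s).val := by
  simp [paritySet, btilde, ht]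

theorem mem_paritySet_iff_of_eq_one (ht : p t = 1) :
    t ∈ paritySet β p ↔ ∀ s, β t s = 1 := by
  simp [paritySet, btilde, ht, ZMod.val_one]

end ParityElements

theorem stmt_8_general {F T : Type*} [Field F] (h2 : (2 : F) ≠ 0) [CommGroup T]
    (β : T → T → Fˣ)
    (hβ1 : ∀ t s s', β t (s * s') = β t s * β t s')
    (p : T → ZMod 2) (hp : ∀ a b, p (a * b) = p a + p b) :
    ((∀ t, p t = 0) →
      paritySet β p = {t : T | ∀ s, btilde β p t s = 1} ∧
      {t : T | ∀ s, btilde β p t s = 1} = {t : T | ∀ s, β t s = 1} ∧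
      {t : T | ∀ s, β t s = 1} = radPlus β p) ∧
    ((∃ t, p t = 1) →
      paritySet β p ∩ {t : T | p t = 0} = radPlus β p \ {t : T | ∀ s, β t s = 1} ∧
      paritySet β p ∩ {t : T | p t = 1} = {t : T | ∀ s, β t s = 1} ∩ {t : T | p t = 1}) := by
  refine ⟨fun hall => ?_, fun ⟨t₁, ht₁⟩ => ⟨?_, ?_⟩⟩
  · rw [btilde_eq_of_forall_eq_zero hall]
    refine ⟨?_, rfl, ?_⟩ <;> ext t <;> simp [mem_paritySet_iff_of_eq_zero, radPlus, hall]
  · ext t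
    simp only [Set.mem_inter_iff, Set.mem_sdiff, Set.mem_ofPred_eq, radPlus]
    refine ⟨fun ⟨hpar, ht⟩ => ?_, fun ⟨⟨ht, hrad⟩, hnrad⟩ => ?_⟩
    · rw [mem_paritySet_iff_of_eq_zero ht,
        forall_eq_neg_one_pow_val_iff h2 (hβ1 t) hp ht₁] at hpar
      exact ⟨⟨ht, hpar.1⟩, hpar.2⟩
    · rw [mem_paritySet_iff_of_eq_zero ht, forall_eq_neg_one_pow_val_iff h2 (hβ1 t) hp ht₁]
      exact ⟨⟨hrad, hnrad⟩, ht⟩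
  · ext t
    simp only [Set.mem_inter_iff, Set.mem_ofPred_eq]
    exact ⟨fun ⟨hpar, ht⟩ => ⟨(mem_paritySet_iff_of_eq_one ht).1 hpar, ht⟩,
      fun ⟨hrad, ht⟩ => ⟨(mem_paritySet_iff_of_eq_one ht).2 hrad, ht⟩⟩

/-- If `T⁻ = ∅`, then `T_p = rad β̃ = rad β = rad β⁺`; if `T⁻ ≠ ∅`,
then `T_p ∩ T⁺ = (rad β⁺) ∖ (rad β)` and `T_p ∩ T⁻ = (rad β) ∩ T⁻`. -/
theorem stmt_8 {F T : Type*} [Field F] (h2 : (2 : F) ≠ 0) [CommGroup T]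
    (β : T → T → Fˣ)
    (hβ1 : ∀ t s s', β t (s * s') = β t s * β t s')
    (hβ2 : ∀ t t' s, β (t * t') s = β t s * β t' s)
    (halt : ∀ t, β t t = 1)
    (p : T → ZMod 2) (hp : ∀ a b, p (a * b) = p a + p b) :
    ((∀ t, p t = 0) →
      paritySet β p = {t : T | ∀ s, btilde β p t s = 1} ∧
      {t : T | ∀ s, btilde β p t s = 1} = {t : T | ∀ s, β t s = 1} ∧
      {t : T | ∀ s, β t s = 1} = radPlus β p) ∧
    ((∃ t, p t = 1) →
      paritySet β p ∩ {t : T | p t = 0} = radPlus β p \ {t : T | ∀ s, β t s = 1} ∧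
      paritySet β p ∩ {t : T | p t = 1} = {t : T | ∀ s, β t s = 1} ∩ {t : T | p t = 1}) :=
  stmt_8_general h2 β hβ1 p hp
end

section
/- With notation as in the context, assume moreover that T is finite. Then the set of parity elements is nonempty: there exists t_p ∈ T with β̃(t_p, t) = (−1)^{p(t)} for all t ∈ T. -/
section Characters

variable {G L : Type*} [Monoid G] [CommRing L] [IsDomain L]

theorem linearIndependent_unitsMonoidHom :
    LinearIndependent L (fun (f : G →* Lˣ) (g : G) => (f g : L)) :=
  (linearIndependent_monoidHom G L).comp (fun f => (Units.coeHom L).comp f)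
    fun _ _ h => MonoidHom.ext fun g => Units.ext (DFunLike.congr_fun h g)

variable [Finite G]

instance finite_monoidHom_units : Finite (G →* Lˣ) := by
  have := Fintype.ofFinite G
  exact linearIndependent_unitsMonoidHom.finite

theorem card_unitsMonoidHom_le : Nat.card (G →* Lˣ) ≤ Nat.card G := by
  have := Fintype.ofFinite G
  have := Fintype.ofFinite (G →* Lˣ)
  simpa [Nat.card_eq_fintype_card] using
    (linearIndependent_unitsMonoidHom (G := G) (L := L)).fintype_card_le_finrank

end Characters

theorem mem_range_of_ker_le_ker {T L : Type*} [CommGroup T] [Finite T] [CommRing L] [IsDomain L]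
    (B : T →* T →* Lˣ) (hB : ∀ t s, B t s * B s t = 1) {χ : T →* Lˣ} (hχ : B.ker ≤ χ.ker) :
    χ ∈ B.range := by
  set K := B.ker
  have hBK : ∀ t, K ≤ (B t).ker := fun t k hk => by
    have := hB t k
    rwa [MonoidHom.mem_ker.mp hk, MonoidHom.one_apply, mul_one] at this
  let pullback := MonoidHom.compHom' (P := Lˣ) (QuotientGroup.mk' K)
  have pullback_lift (φ : T →* Lˣ) (h : K ≤ φ.ker) : pullback (QuotientGroup.lift K φ h) = φ :=
    MonoidHom.ext fun _ => rfl
  have hle : B.range ≤ pullback.range := by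
    rintro _ ⟨t, rfl⟩
    exact ⟨_, pullback_lift (B t) (hBK t)⟩
  have hcard : Nat.card pullback.range ≤ Nat.card B.range := calc
    Nat.card pullback.range ≤ Nat.card (T ⧸ K →* Lˣ) :=
      Nat.card_le_card_of_surjective _ pullback.rangeRestrict_surjective
    _ ≤ Nat.card (T ⧸ K) := card_unitsMonoidHom_le
    _ = Nat.card B.range := Nat.card_congr (QuotientGroup.quotientKerEquivRange B).toEquiv
  rw [Subgroup.eq_of_le_of_card_ge hle hcard]
  exact ⟨_, pullback_lift χ hχ⟩

theorem exists_forall_apply_eq_diag {T L : Type*} [CommGroup T] [Finite T] [CommRing L]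
    [IsDomain L] (B : T →* T →* Lˣ) (hB : ∀ t s, B t s * B s t = 1) :
    ∃ t₀, ∀ t, B t₀ t = B t t := by
  let diag : T →* Lˣ := MonoidHom.mk' (fun t => B t t) fun a b => by
    simp only [map_mul, MonoidHom.mul_apply]
    calc B a a * B b a * (B a b * B b b) = B a a * B b b * (B a b * B b a) := by ac_rfl
      _ = B a a * B b b := by rw [hB, mul_one]
  obtain ⟨t₀, ht₀⟩ := mem_range_of_ker_le_ker B hB (χ := diag) fun k hk => by
    simp [diag, MonoidHom.mem_ker.mp hk]
  exact ⟨t₀, fun t => DFunLike.congr_fun ht₀ t⟩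

theorem neg_one_pow_zmod_two_val_add {M : Type*} [Monoid M] [HasDistribNeg M] (a b : ZMod 2) :
    (-1 : M) ^ (a + b).val = (-1) ^ a.val * (-1) ^ b.val := by
  rw [ZMod.val_add, ← pow_eq_pow_mod _ neg_one_sq, pow_add]

theorem neg_one_pow_zmod_two_val_mul {M : Type*} [Monoid M] [HasDistribNeg M] (a b : ZMod 2) :
    (-1 : M) ^ (a.val * b.val) = (-1) ^ (a * b).val := by
  rw [ZMod.val_mul, ← pow_eq_pow_mod _ neg_one_sq]

section Bicharacter

variable {F T : Type*} [Field F] [CommGroup T] {β : T → T → Fˣ} {p : T → ZMod 2}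

theorem mul_swap_eq_one_of_alternating (hβ1 : ∀ t s s', β t (s * s') = β t s * β t s')
    (hβ2 : ∀ t t' s, β (t * t') s = β t s * β t' s) (halt : ∀ t, β t t = 1) (t s : T) :
    β t s * β s t = 1 := by
  have h := halt (t * s)
  rwa [hβ2, hβ1, hβ1, halt, halt, one_mul, mul_one] at h

theorem btilde_eq (t s : T) : btilde β p t s = (-1) ^ (p t * p s).val * β t s := by
  rw [btilde, neg_one_pow_zmod_two_val_mul]

theorem btilde_mul_right (hβ1 : ∀ t s s', β t (s * s') = β t s * β t s')
    (hp : ∀ a b, p (a * b) = p a + p b) (t s s' : T) :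
    btilde β p t (s * s') = btilde β p t s * btilde β p t s' := by
  simp only [btilde_eq, hβ1, hp, mul_add, neg_one_pow_zmod_two_val_add]
  exact mul_mul_mul_comm _ _ _ _

theorem btilde_mul_left (hβ2 : ∀ t t' s, β (t * t') s = β t s * β t' s)
    (hp : ∀ a b, p (a * b) = p a + p b) (t t' s : T) :
    btilde β p (t * t') s = btilde β p t s * btilde β p t' s := by
  simp only [btilde_eq, hβ2, hp, add_mul, neg_one_pow_zmod_two_val_add]
  exact mul_mul_mul_comm _ _ _ _

theorem btilde_mul_btilde_swap (hβ1 : ∀ t s s', β t (s * s') = β t s * β t s')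
    (hβ2 : ∀ t t' s, β (t * t') s = β t s * β t' s) (halt : ∀ t, β t t = 1) (t s : T) :
    btilde β p t s * btilde β p s t = 1 := by
  rw [btilde, btilde, mul_mul_mul_comm, ← pow_add, mul_comm (p s).val, ← two_mul, pow_mul,
    neg_one_sq, one_pow, one_mul, mul_swap_eq_one_of_alternating hβ1 hβ2 halt]

theorem btilde_self (halt : ∀ t, β t t = 1) (t : T) : btilde β p t t = (-1) ^ (p t).val := by
  have val_mul_self : ∀ a : ZMod 2, a.val * a.val = a.val := by decide
  rw [btilde, halt, mul_one, val_mul_self]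

def btildeHom (hβ1 : ∀ t s s', β t (s * s') = β t s * β t s')
    (hβ2 : ∀ t t' s, β (t * t') s = β t s * β t' s) (hp : ∀ a b, p (a * b) = p a + p b) :
    T →* T →* Fˣ :=
  MonoidHom.mk' (fun t => MonoidHom.mk' (btilde β p t) (btilde_mul_right hβ1 hp t))
    fun t t' => MonoidHom.ext (btilde_mul_left hβ2 hp t t')

end Bicharacter

theorem stmt_10_general {F T : Type*} [Field F] [CommGroup T] [Fintype T]
    (β : T → T → Fˣ)
    (hβ1 : ∀ t s s', β t (s * s') = β t s * β t s')
    (hβ2 : ∀ t t' s, β (t * t') s = β t s * β t' s)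
    (halt : ∀ t, β t t = 1)
    (p : T → ZMod 2) (hp : ∀ a b, p (a * b) = p a + p b) :
    ∃ tp : T, ∀ t, btilde β p tp t = (-1 : Fˣ) ^ (p t).val := by
  obtain ⟨tp, htp⟩ := exists_forall_apply_eq_diag (btildeHom hβ1 hβ2 hp)
    (btilde_mul_btilde_swap hβ1 hβ2 halt)
  exact ⟨tp, fun t => (htp t).trans (btilde_self halt t)⟩

/-- For finite `T`, an alternating bicharacter `β` on `T` with
values in `Fˣ` (`char F ≠ 2`) and a homomorphism `p : T → ℤ/2`, the set of parity
elements is nonempty: there exists `t_p ∈ T` with `β̃(t_p, t) = (−1)^{p(t)}`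
for all `t ∈ T`. -/
theorem stmt_10 {F T : Type*} [Field F] (h2 : (2 : F) ≠ 0) [CommGroup T] [Fintype T]
    (β : T → T → Fˣ)
    (hβ1 : ∀ t s s', β t (s * s') = β t s * β t s')
    (hβ2 : ∀ t t' s, β (t * t') s = β t s * β t' s)
    (halt : ∀ t, β t t = 1)
    (p : T → ZMod 2) (hp : ∀ a b, p (a * b) = p a + p b) :
    ∃ tp : T, ∀ t, btilde β p tp t = (-1 : Fˣ) ^ (p t).val :=
  stmt_10_general β hβ1 hβ2 halt p hp
end

section
/- With D, T, p, the elements X_t, and β̃ as in the context: given any map η: T → Fˣ, let φ₀: D → D be the F-linear map determined by φ₀(X_t) = η(t)X_t for all t ∈ T. Then φ₀ is a super-anti-automorphism of D if and only if η(ab) = β̃(a,b)η(a)η(b) for all a, b ∈ T. Moreover, D admits a degree-preserving super-anti-automorphism if and only if β̃ takes only the values 1 and −1. -/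
/-!
For `φ` acting on each component `𝒜 t` by a scalar `μ t`, the super-anti-automorphism identity
at `X a, X b` compares two multiples of the nonzero vector `X a * X b` and says exactly
`μ (a + b) = β̃ (a, b) μ a μ b`; by bilinearity the identity on basis elements suffices. A
degree-preserving bijection acts by nonzero scalars on the one-dimensional components, so such a
map exists iff some `μ` satisfies the identity. Exchanging `a` and `b` then forces `β̃` to be
symmetric, hence `±1`-valued since it is skew. Conversely, a symmetric bicharacter with values in
the divisible group `Fˣ` is of the form `μ (a + b) / (μ a μ b)`: the central extension of `T` by
`Fˣ` it defines is abelian, and it splits because divisible abelian groups are injective.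
-/

section CentralExtension

variable {A T : Type*} [AddCommGroup A] [AddCommGroup T]

/-- The central extension of `T` by `A` defined by the 2-cocycle `γ`. -/
@[ext]
structure TwistedProd (γ : T →+ T →+ A) where
  fst : A
  snd : T

namespace TwistedProd

variable {γ : T →+ T →+ A}

instance : Zero (TwistedProd γ) := ⟨⟨0, 0⟩⟩

instance : Add (TwistedProd γ) := ⟨fun x y => ⟨x.fst + y.fst + γ x.snd y.snd, x.snd + y.snd⟩⟩

instance : Neg (TwistedProd γ) := ⟨fun x => ⟨-x.fst + γ x.snd x.snd, -x.snd⟩⟩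

@[simp] lemma fst_zero : (0 : TwistedProd γ).fst = 0 := rfl
@[simp] lemma snd_zero : (0 : TwistedProd γ).snd = 0 := rfl
@[simp] lemma fst_add (x y : TwistedProd γ) : (x + y).fst = x.fst + y.fst + γ x.snd y.snd := rfl
@[simp] lemma snd_add (x y : TwistedProd γ) : (x + y).snd = x.snd + y.snd := rfl
@[simp] lemma fst_neg (x : TwistedProd γ) : (-x).fst = -x.fst + γ x.snd x.snd := rfl
@[simp] lemma snd_neg (x : TwistedProd γ) : (-x).snd = -x.snd := rfl

abbrev addCommGroup (hγ : ∀ a b, γ a b = γ b a) : AddCommGroup (TwistedProd γ) where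
  add_assoc x y z := by
    ext <;> simp only [fst_add, snd_add, map_add, AddMonoidHom.add_apply] <;> abel
  zero_add x := by ext <;> simp
  add_zero x := by ext <;> simp
  neg_add_cancel x := by ext <;> simp
  add_comm x y := by ext <;> simp only [fst_add, snd_add, hγ x.snd] <;> abel
  nsmul := nsmulRec
  zsmul := zsmulRec

end TwistedProd

theorem exists_add_eq_of_symm [DivisibleBy A ℤ] (γ : T →+ T →+ A) (hγ : ∀ a b, γ a b = γ b a) :
    ∃ f : T → A, ∀ a b, f (a + b) = f a + f b + γ a b := by
  let _ := TwistedProd.addCommGroup hγ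
  let i : A →+ TwistedProd γ :=
    { toFun a := ⟨a, 0⟩
      map_zero' := rfl
      map_add' a b := by ext <;> simp }
  have hi : Function.Injective i := fun a b h => congrArg TwistedProd.fst h
  obtain ⟨r, hr⟩ := (Module.Baer.of_divisible A).extension_property_addMonoidHom i hi (.id A)
  refine ⟨fun t => -r ⟨0, t⟩, fun a b => ?_⟩
  have hsplit : (⟨0, a⟩ + ⟨0, b⟩ : TwistedProd γ) = i (γ a b) + ⟨0, a + b⟩ := by
    ext <;> simp [i]
  have h := congrArg r hsplit
  rw [map_add, map_add, ← AddMonoidHom.comp_apply r i, hr, AddMonoidHom.id_apply] at h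
  beta_reduce
  linear_combination (norm := abel) h

theorem IsAlgClosed.zpow_surjective_units {F : Type*} [Field F] [IsAlgClosed F] {n : ℤ}
    (hn : n ≠ 0) : Function.Surjective fun u : Fˣ => u ^ n := by
  intro b
  obtain ⟨x, hx⟩ := IsAlgClosed.exists_pow_nat_eq (b : F) (Int.natAbs_pos.2 hn)
  have hx0 : x ≠ 0 := by
    rintro rfl
    exact b.ne_zero (by rw [← hx, zero_pow (Int.natAbs_ne_zero.2 hn)])
  have hu : Units.mk0 x hx0 ^ n.natAbs = b := Units.ext (by simpa using hx)
  rcases Int.natAbs_eq n with h | h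
  · exact ⟨Units.mk0 x hx0, by beta_reduce; rw [h, zpow_natCast, hu]⟩
  · refine ⟨(Units.mk0 x hx0)⁻¹, ?_⟩
    beta_reduce
    rw [h, zpow_neg, zpow_natCast, inv_pow, inv_inv, hu]

theorem IsAlgClosed.exists_units_map_add_eq {F : Type*} [Field F] [IsAlgClosed F]
    (β : T → T → Fˣ) (hadd : ∀ a b c, β (a + b) c = β a c * β b c)
    (hsymm : ∀ a b, β a b = β b a) : ∃ η : T → Fˣ, ∀ a b, η (a + b) = β a b * η a * η b := by
  let _ : DivisibleBy (Additive Fˣ) ℤ :=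
    divisibleByOfSMulRightSurj _ _ fun hn => IsAlgClosed.zpow_surjective_units hn
  let γ : T →+ T →+ Additive Fˣ :=
    AddMonoidHom.mk'
      (fun a => AddMonoidHom.mk' (fun b => .ofMul (β a b)) fun b c => by
        simp only [hsymm a, hadd]; rfl)
      fun a b => by ext c; simp only [AddMonoidHom.mk'_apply, hadd]; rfl
  obtain ⟨f, hf⟩ := exists_add_eq_of_symm γ fun a b => congrArg Additive.ofMul (hsymm a b)
  refine ⟨fun t => (f t).toMul, fun a b => ?_⟩
  beta_reduce
  rw [hf, toMul_add, toMul_add, mul_comm, ← mul_assoc]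
  rfl

end CentralExtension

theorem symm_of_map_add_eq {T G : Type*} [AddCommMonoid T] [CommGroup G] {β : T → T → G}
    {μ : T → G} (h : ∀ a b, μ (a + b) = β a b * μ a * μ b) (a b : T) : β a b = β b a := by
  have h' := h b a
  rw [add_comm, h, mul_right_comm (β b a), mul_assoc, mul_assoc] at h'
  exact mul_right_cancel h'

theorem neg_one_pow_val_add_mul {M : Type*} [Monoid M] [HasDistribNeg M] (x y z : ZMod 2) :
    (-1 : M) ^ ((x + y).val * z.val) = (-1) ^ (x.val * z.val) * (-1) ^ (y.val * z.val) := by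
  rw [← pow_add, ← add_mul, ZMod.val_add]
  exact neg_one_pow_congr (by simp [Nat.even_iff])

theorem neg_one_pow_mul_self {M : Type*} [Monoid M] [HasDistribNeg M] (n : ℕ) :
    (-1 : M) ^ n * (-1) ^ n = 1 := by
  rw [← pow_add, ← two_mul, pow_mul, neg_one_sq, one_pow]

section ComponentSMul

variable {ι R M : Type*} [DecidableEq ι] [CommSemiring R] [AddCommMonoid M] [Module R M]
  (𝒜 : ι → Submodule R M) [DirectSum.Decomposition 𝒜]

noncomputable def componentSMul (μ : ι → R) : M →ₗ[R] M :=
  DirectSum.toModule R ι M (fun i => μ i • (𝒜 i).subtype) ∘ₗ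
    (DirectSum.decomposeLinearEquiv 𝒜).toLinearMap

theorem componentSMul_apply_of_mem (μ : ι → R) {i : ι} {x : M} (hx : x ∈ 𝒜 i) :
    componentSMul 𝒜 μ x = μ i • x := by
  simp [componentSMul, DirectSum.decomposeLinearEquiv_apply, DirectSum.decompose_of_mem 𝒜 hx,
    ← DirectSum.lof_eq_of R]

theorem eq_componentSMul {φ : M →ₗ[R] M} {μ : ι → R} (h : ∀ i, ∀ x ∈ 𝒜 i, φ x = μ i • x) :
    φ = componentSMul 𝒜 μ :=
  DirectSum.decompose_lhom_ext 𝒜 fun i => LinearMap.ext fun x => by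
    simp [h i x x.2, componentSMul_apply_of_mem 𝒜 μ x.2]

theorem componentSMul_comp_componentSMul (μ ν : ι → R) :
    componentSMul 𝒜 μ ∘ₗ componentSMul 𝒜 ν = componentSMul 𝒜 (μ * ν) :=
  eq_componentSMul 𝒜 fun i x hx => by
    rw [LinearMap.comp_apply, componentSMul_apply_of_mem 𝒜 ν hx,
      componentSMul_apply_of_mem 𝒜 μ (Submodule.smul_mem _ _ hx), smul_smul, Pi.mul_apply]

theorem componentSMul_one : componentSMul 𝒜 (1 : ι → R) = LinearMap.id :=
  (eq_componentSMul 𝒜 (φ := LinearMap.id) fun _ _ _ => (one_smul R _).symm).symm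

theorem bijective_of_forall_mem_eq_smul (μ : ι → Rˣ) {φ : M →ₗ[R] M}
    (h : ∀ i, ∀ x ∈ 𝒜 i, φ x = (μ i : R) • x) : Function.Bijective φ := by
  have inv : ∀ ν : ι → Rˣ, componentSMul 𝒜 (ν ·) ∘ₗ componentSMul 𝒜 (ν⁻¹ ·) = LinearMap.id :=
    fun ν => by
      rw [componentSMul_comp_componentSMul, ← componentSMul_one 𝒜]
      congr 1; ext i; simp
  rw [eq_componentSMul 𝒜 h]
  refine ⟨Function.LeftInverse.injective (g := componentSMul 𝒜 (μ⁻¹ ·)) fun x => ?_,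
    Function.RightInverse.surjective (g := componentSMul 𝒜 (μ⁻¹ ·)) (LinearMap.congr_fun (inv μ))⟩
  simpa using LinearMap.congr_fun (inv μ⁻¹) x

end ComponentSMul

section BiSup

variable {ι R M : Type*} [Semiring R] [AddCommMonoid M] [Module R M]

theorem Submodule.biSup_induction (s : Set ι) (p : ι → Submodule R M) {motive : M → Prop}
    {x : M} (hx : x ∈ ⨆ i ∈ s, p i) (mem : ∀ i ∈ s, ∀ x ∈ p i, motive x) (zero : motive 0)
    (add : ∀ x y, motive x → motive y → motive (x + y)) : motive x := by
  rw [← iSup_subtype''] at hx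
  exact Submodule.iSup_induction _ (motive := motive) hx (fun i => mem i i.2) zero add

theorem Submodule.map_mem_biSup_of_forall_mem (s : Set ι) (p : ι → Submodule R M)
    {φ : M →ₗ[R] M} (h : ∀ i, ∀ x ∈ p i, φ x ∈ p i) {x : M} (hx : x ∈ ⨆ i ∈ s, p i) :
    φ x ∈ ⨆ i ∈ s, p i := by
  refine Submodule.biSup_induction s p (motive := fun x => φ x ∈ ⨆ i ∈ s, p i) hx
    (fun i hi x hx => le_biSup p hi (h i x hx)) (by simp) fun x y hx hy => ?_
  simpa using add_mem hx hy

end BiSup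

theorem superAnti_iff_forall_mem {ι R D : Type*} [CommRing R] [Ring D] [Algebra R D]
    (𝒜 : ι → Submodule R D) (p : ι → ZMod 2) (φ : D →ₗ[R] D) :
    (∀ (i j : ZMod 2), ∀ x ∈ (⨆ t ∈ {t : ι | p t = i}, 𝒜 t),
      ∀ y ∈ (⨆ t ∈ {t : ι | p t = j}, 𝒜 t),
        φ (x * y) = ((-1 : R) ^ (i.val * j.val)) • (φ y * φ x)) ↔
    ∀ a b, ∀ x ∈ 𝒜 a, ∀ y ∈ 𝒜 b,
      φ (x * y) = ((-1 : R) ^ ((p a).val * (p b).val)) • (φ y * φ x) := by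
  refine ⟨fun h a b x hx y hy =>
    h (p a) (p b) x (le_biSup (s := {t | p t = p a}) 𝒜 rfl hx) y
      (le_biSup (s := {t | p t = p b}) 𝒜 rfl hy), ?_⟩
  intro h i j x hx y hy
  refine Submodule.biSup_induction _ 𝒜 (motive := fun x =>
    φ (x * y) = ((-1 : R) ^ (i.val * j.val)) • (φ y * φ x)) hx (fun a ha d hd => ?_) (by simp)
    fun x₁ x₂ h₁ h₂ => by rw [add_mul, map_add, h₁, h₂, map_add, mul_add, smul_add]
  refine Submodule.biSup_induction _ 𝒜 (motive := fun y =>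
    φ (d * y) = ((-1 : R) ^ (i.val * j.val)) • (φ y * φ d)) hy (fun b hb e he => ?_) (by simp)
    fun y₁ y₂ h₁ h₂ => by rw [mul_add, map_add, h₁, h₂, map_add, add_mul, smul_add]
  obtain rfl : p a = i := ha
  obtain rfl : p b = j := hb
  exact h a b d hd e he

theorem Submodule.exists_smul_eq_of_finrank_eq_one {K V : Type*} [DivisionRing K]
    [AddCommGroup V] [Module K V] {W : Submodule K V} (h : Module.finrank K W = 1) {v : V}
    (hv : v ∈ W) (hv0 : v ≠ 0) {w : V} (hw : w ∈ W) : ∃ c : K, c • v = w := by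
  obtain ⟨c, hc⟩ :=
    (finrank_eq_one_iff_of_nonzero' (⟨v, hv⟩ : W) (by simpa using hv0)).1 h ⟨w, hw⟩
  exact ⟨c, congrArg Subtype.val hc⟩

/-- The homogeneous basis of a graded-division algebra with one-dimensional components. -/
structure IsGradedDivisionBasis {F T D : Type*} [Field F] [Ring D] [Algebra F D]
    (𝒜 : T → Submodule F D) (X : T → D) : Prop where
  mem : ∀ t, X t ∈ 𝒜 t
  span : ∀ t, ∀ d ∈ 𝒜 t, ∃ c : F, c • X t = d
  mul_ne_zero : ∀ a b, X a * X b ≠ 0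

namespace IsGradedDivisionBasis

variable {F T D : Type*} [Field F] [Ring D] [Algebra F D] {𝒜 : T → Submodule F D} {X : T → D}

theorem of_finrank_eq_one (hdim : ∀ t, Module.finrank F (𝒜 t) = 1)
    (hdiv : ∀ t, ∀ d ∈ 𝒜 t, d ≠ 0 → IsUnit d) (hX : ∀ t, X t ∈ 𝒜 t) (hX0 : ∀ t, X t ≠ 0) :
    IsGradedDivisionBasis 𝒜 X where
  mem := hX
  span t _ hd := Submodule.exists_smul_eq_of_finrank_eq_one (hdim t) (hX t) (hX0 t) hd
  mul_ne_zero a b h := hX0 a ((hdiv b _ (hX b) (hX0 b)).mul_left_eq_zero.1 h)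

variable (hB : IsGradedDivisionBasis 𝒜 X)
include hB

theorem map_eq_smul_of_mem {φ : D →ₗ[F] D} {t : T} {c : F} (h : φ (X t) = c • X t) {d : D}
    (hd : d ∈ 𝒜 t) : φ d = c • d := by
  obtain ⟨r, rfl⟩ := hB.span t d hd
  rw [map_smul, h, smul_comm]

theorem exists_units_of_injective {ψ : D →ₗ[F] D} (hinj : Function.Injective ψ)
    (hdeg : ∀ t, ∀ x ∈ 𝒜 t, ψ x ∈ 𝒜 t) : ∃ μ : T → Fˣ, ∀ t, ∀ d ∈ 𝒜 t, ψ d = (μ t : F) • d := by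
  choose c hc using fun t => hB.span t _ (hdeg t _ (hB.mem t))
  have hc0 : ∀ t, c t ≠ 0 := fun t h0 => by
    have : ψ (X t) = ψ 0 := by rw [← hc, h0, zero_smul, map_zero]
    exact hB.mul_ne_zero t t (by rw [hinj this, zero_mul])
  exact ⟨fun t => Units.mk0 (c t) (hc0 t), fun t d => hB.map_eq_smul_of_mem (hc t).symm⟩

theorem forall_mem_map_mul_iff (φ : D →ₗ[F] D) (c : T → T → F) :
    (∀ a b, ∀ x ∈ 𝒜 a, ∀ y ∈ 𝒜 b, φ (x * y) = c a b • (φ y * φ x)) ↔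
      ∀ a b, φ (X a * X b) = c a b • (φ (X b) * φ (X a)) := by
  refine ⟨fun h a b => h a b _ (hB.mem a) _ (hB.mem b), fun h a b x hx y hy => ?_⟩
  obtain ⟨r, rfl⟩ := hB.span a x hx
  obtain ⟨s, rfl⟩ := hB.span b y hy
  rw [smul_mul_smul_comm, map_smul, h, map_smul, map_smul, smul_mul_smul_comm, smul_comm,
    mul_comm s r]

theorem commFactor_mul_swap (ε : T → T → Fˣ)
    (hε : ∀ t s, X t * X s = (ε t s : F) • (X s * X t)) (a b : T) : ε a b * ε b a = 1 := by
  have h := hε a b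
  rw [hε b a, smul_smul] at h
  exact Units.ext (smul_left_injective F (hB.mul_ne_zero a b) (by simpa using h.symm))

theorem commFactor_add_left [AddMonoid T] [SetLike.GradedMul 𝒜] (ε : T → T → Fˣ)
    (hε : ∀ t s, X t * X s = (ε t s : F) • (X s * X t)) (a b c : T) :
    ε (a + b) c = ε a c * ε b c := by
  obtain ⟨r, hr⟩ := hB.span _ _ (SetLike.mul_mem_graded (hB.mem a) (hB.mem b))
  have hr0 : r ≠ 0 := by
    rintro rfl
    exact hB.mul_ne_zero a b (by rw [← hr, zero_smul])
  have hne : X c * (X a * X b) ≠ 0 := by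
    rw [← hr, mul_smul_comm]
    exact smul_ne_zero hr0 (hB.mul_ne_zero c (a + b))
  have h₁ : X a * X b * X c = (ε (a + b) c : F) • (X c * (X a * X b)) := by
    rw [← hr, smul_mul_assoc, hε, mul_smul_comm, smul_comm]
  have h₂ : X a * X b * X c = ((ε a c * ε b c : Fˣ) : F) • (X c * (X a * X b)) := by
    rw [mul_assoc, hε b c, mul_smul_comm, ← mul_assoc, hε a c, smul_mul_assoc, smul_smul,
      mul_assoc, Units.val_mul, mul_comm (ε b c : F)]
  exact Units.ext (smul_left_injective F hne (h₁.symm.trans h₂))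

section Sign

variable (p : T → ZMod 2) (β : T → T → Fˣ)
  (hβ : ∀ t s, X t * X s =
    ((((-1 : Fˣ) ^ ((p t).val * (p s).val) * β t s : Fˣ) : F)) • (X s * X t))
include hβ

theorem mul_swap_eq_one (a b : T) : β a b * β b a = 1 := by
  have h := hB.commFactor_mul_swap _ hβ a b
  rwa [mul_mul_mul_comm, Nat.mul_comm (p b).val, neg_one_pow_mul_self, one_mul] at h

theorem add_left_eq_mul [AddMonoid T] [SetLike.GradedMul 𝒜] (hp : ∀ a b, p (a + b) = p a + p b)
    (a b c : T) : β (a + b) c = β a c * β b c := by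
  have h := hB.commFactor_add_left _ hβ a b c
  rw [hp, neg_one_pow_val_add_mul, mul_mul_mul_comm] at h
  exact mul_left_cancel h

variable [AddCommMonoid T] [SetLike.GradedMul 𝒜]

theorem map_mul_basis_iff (μ : T → Fˣ) {φ : D →ₗ[F] D}
    (hφ : ∀ t, ∀ d ∈ 𝒜 t, φ d = (μ t : F) • d) :
    (∀ a b, φ (X a * X b) = (-1 : F) ^ ((p a).val * (p b).val) • (φ (X b) * φ (X a))) ↔
      ∀ a b, μ (a + b) = β a b * μ a * μ b := by
  rw [forall_comm]
  refine forall₂_congr fun a b => ?_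
  rw [hφ _ _ (SetLike.mul_mem_graded (hB.mem b) (hB.mem a)), hφ a _ (hB.mem a),
    hφ b _ (hB.mem b), smul_mul_smul_comm, hβ a b, smul_smul, smul_smul,
    (smul_left_injective F (hB.mul_ne_zero b a)).eq_iff, Units.ext_iff, add_comm b a,
    Nat.mul_comm (p b).val]
  congr! 1
  push_cast
  linear_combination (β a b * μ a * μ b : F) * neg_one_pow_mul_self (M := F) ((p a).val * (p b).val)

theorem superAnti_iff_map_add_eq (μ : T → Fˣ) {φ : D →ₗ[F] D}
    (hφ : ∀ t, ∀ d ∈ 𝒜 t, φ d = (μ t : F) • d) :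
    (∀ (i j : ZMod 2), ∀ x ∈ (⨆ t ∈ {t : T | p t = i}, 𝒜 t),
      ∀ y ∈ (⨆ t ∈ {t : T | p t = j}, 𝒜 t),
        φ (x * y) = ((-1 : F) ^ (i.val * j.val)) • (φ y * φ x)) ↔
      ∀ a b, μ (a + b) = β a b * μ a * μ b :=
  (superAnti_iff_forall_mem 𝒜 p φ).trans <|
    (hB.forall_mem_map_mul_iff φ _).trans <| hB.map_mul_basis_iff p β hβ μ hφ

end Sign

end IsGradedDivisionBasis

theorem stmt_11_general {F T D : Type*} [Field F] [IsAlgClosed F]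
    [AddCommGroup T] [DecidableEq T]
    [Ring D] [Algebra F D]
    (𝒜 : T → Submodule F D) [GradedAlgebra 𝒜]
    (hdim : ∀ t, Module.finrank F (𝒜 t) = 1)
    (hdiv : ∀ t, ∀ d ∈ 𝒜 t, d ≠ 0 → IsUnit d)
    (p : T → ZMod 2) (hp : ∀ a b, p (a + b) = p a + p b)
    (X : T → D) (hX : ∀ t, X t ∈ 𝒜 t) (hX0 : ∀ t, X t ≠ 0)
    (βt : T → T → Fˣ)
    (hβt : ∀ t s, X t * X s =
      ((((-1 : Fˣ) ^ ((p t).val * (p s).val) * βt t s : Fˣ) : F)) • (X s * X t))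
    (η : T → Fˣ) (φ₀ : D →ₗ[F] D)
    (hφ₀ : ∀ t, φ₀ (X t) = ((η t : F)) • X t) :
    ((Function.Bijective φ₀ ∧
      (∀ i : ZMod 2, ∀ x ∈ (⨆ t ∈ {t : T | p t = i}, 𝒜 t),
        φ₀ x ∈ (⨆ t ∈ {t : T | p t = i}, 𝒜 t)) ∧
      (∀ (i j : ZMod 2), ∀ x ∈ (⨆ t ∈ {t : T | p t = i}, 𝒜 t),
        ∀ y ∈ (⨆ t ∈ {t : T | p t = j}, 𝒜 t),
          φ₀ (x * y) = ((-1 : F) ^ (i.val * j.val)) • (φ₀ y * φ₀ x)))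
      ↔ (∀ a b : T, η (a + b) = βt a b * η a * η b)) ∧
    ((∃ ψ : D →ₗ[F] D, Function.Bijective ψ ∧
        (∀ t : T, ∀ x ∈ 𝒜 t, ψ x ∈ 𝒜 t) ∧
        (∀ (i j : ZMod 2), ∀ x ∈ (⨆ t ∈ {t : T | p t = i}, 𝒜 t),
          ∀ y ∈ (⨆ t ∈ {t : T | p t = j}, 𝒜 t),
            ψ (x * y) = ((-1 : F) ^ (i.val * j.val)) • (ψ y * ψ x)))
      ↔ (∀ t s : T, βt t s = 1 ∨ βt t s = -1)) := by
  have hB := IsGradedDivisionBasis.of_finrank_eq_one hdim hdiv hX hX0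
  have hdeg : ∀ (μ : T → Fˣ) (φ : D →ₗ[F] D), (∀ t, ∀ d ∈ 𝒜 t, φ d = (μ t : F) • d) →
      ∀ t, ∀ d ∈ 𝒜 t, φ d ∈ 𝒜 t := fun μ φ hφ t d hd => hφ t d hd ▸ Submodule.smul_mem _ _ hd
  have hφ₀' : ∀ t, ∀ d ∈ 𝒜 t, φ₀ d = (η t : F) • d := fun t _ => hB.map_eq_smul_of_mem (hφ₀ t)
  have hsymm_iff : (∀ a b, βt a b = βt b a) ↔ ∀ t s, βt t s = 1 ∨ βt t s = -1 :=
    forall₂_congr fun a b => by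
      rw [← Units.inv_eq_self_iff, inv_eq_of_mul_eq_one_right (hB.mul_swap_eq_one p βt hβt a b),
        eq_comm]
  have hφ₀anti := hB.superAnti_iff_map_add_eq p βt hβt η hφ₀'
  refine ⟨⟨fun h => hφ₀anti.1 h.2.2, fun h => ⟨?_, ?_, hφ₀anti.2 h⟩⟩, ?_⟩
  · exact bijective_of_forall_mem_eq_smul 𝒜 η hφ₀'
  · exact fun i x => Submodule.map_mem_biSup_of_forall_mem _ 𝒜 (hdeg η φ₀ hφ₀')
  rw [← hsymm_iff]
  constructor
  · rintro ⟨ψ, hbij, hψdeg, hanti⟩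
    obtain ⟨μ, hμ⟩ := hB.exists_units_of_injective hbij.1 hψdeg
    exact symm_of_map_add_eq ((hB.superAnti_iff_map_add_eq p βt hβt μ hμ).1 hanti)
  · intro hsymm
    obtain ⟨μ, hμ⟩ :=
      IsAlgClosed.exists_units_map_add_eq βt (hB.add_left_eq_mul p βt hβt hp) hsymm
    have hψ : ∀ t, ∀ d ∈ 𝒜 t, componentSMul 𝒜 (μ ·) d = (μ t : F) • d :=
      fun t d => componentSMul_apply_of_mem 𝒜 _
    exact ⟨componentSMul 𝒜 (μ ·), bijective_of_forall_mem_eq_smul 𝒜 μ hψ, hdeg μ _ hψ,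
      (hB.superAnti_iff_map_add_eq p βt hβt μ hψ).2 hμ⟩

/-- Let `D` be a graded-division superalgebra over an algebraically
closed field `F` (`char F ≠ 2`) with one-dimensional homogeneous components `D_t`
spanned by `X_t`, supported on a finite abelian group `T` with parity homomorphism
`p : T → ℤ/2`, and let `β̃` be the skew-symmetric bicharacter defined by
`X_t X_s = (−1)^{p(t)p(s)} β̃(t,s) X_s X_t`. Given a map `η : T → Fˣ`, the `F`-linear
map `φ₀` determined by `φ₀(X_t) = η(t) X_t` is a super-anti-automorphism of `D` iff
`η(ab) = β̃(a,b) η(a) η(b)` for all `a, b ∈ T`. Moreover, `D` admits a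
degree-preserving super-anti-automorphism iff `β̃` takes only the values `±1`. -/
theorem stmt_11 {F T D : Type*} [Field F] [IsAlgClosed F] (h2 : (2 : F) ≠ 0)
    [AddCommGroup T] [Fintype T] [DecidableEq T]
    [Ring D] [Algebra F D]
    (𝒜 : T → Submodule F D) [GradedAlgebra 𝒜]
    (hdim : ∀ t, Module.finrank F (𝒜 t) = 1)
    (hdiv : ∀ t, ∀ d ∈ 𝒜 t, d ≠ 0 → IsUnit d)
    (p : T → ZMod 2) (hp : ∀ a b, p (a + b) = p a + p b)
    (X : T → D) (hX : ∀ t, X t ∈ 𝒜 t) (hX0 : ∀ t, X t ≠ 0)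
    (βt : T → T → Fˣ)
    (hβt : ∀ t s, X t * X s =
      ((((-1 : Fˣ) ^ ((p t).val * (p s).val) * βt t s : Fˣ) : F)) • (X s * X t))
    (η : T → Fˣ) (φ₀ : D →ₗ[F] D)
    (hφ₀ : ∀ t, φ₀ (X t) = ((η t : F)) • X t) :
    ((Function.Bijective φ₀ ∧
      (∀ i : ZMod 2, ∀ x ∈ (⨆ t ∈ {t : T | p t = i}, 𝒜 t),
        φ₀ x ∈ (⨆ t ∈ {t : T | p t = i}, 𝒜 t)) ∧
      (∀ (i j : ZMod 2), ∀ x ∈ (⨆ t ∈ {t : T | p t = i}, 𝒜 t),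
        ∀ y ∈ (⨆ t ∈ {t : T | p t = j}, 𝒜 t),
          φ₀ (x * y) = ((-1 : F) ^ (i.val * j.val)) • (φ₀ y * φ₀ x)))
      ↔ (∀ a b : T, η (a + b) = βt a b * η a * η b)) ∧
    ((∃ ψ : D →ₗ[F] D, Function.Bijective ψ ∧
        (∀ t : T, ∀ x ∈ 𝒜 t, ψ x ∈ 𝒜 t) ∧
        (∀ (i j : ZMod 2), ∀ x ∈ (⨆ t ∈ {t : T | p t = i}, 𝒜 t),
          ∀ y ∈ (⨆ t ∈ {t : T | p t = j}, 𝒜 t),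
            ψ (x * y) = ((-1 : F) ^ (i.val * j.val)) • (ψ y * ψ x)))
      ↔ (∀ t s : T, βt t s = 1 ∨ βt t s = -1)) :=
  stmt_11_general 𝒜 hdim hdiv p hp X hX hX0 βt hβt η φ₀ hφ₀
end

section
/- Let F be a field with char F ≠ 2, let T be a finite elementary abelian 2-group, and let β: T × T → Fˣ be a nondegenerate alternating bicharacter. If η, η': T → Fˣ both satisfy η(ab) = β(a,b)η(a)η(b) and η'(ab) = β(a,b)η'(a)η'(b) for all a, b ∈ T, then there exists t ∈ T such that η'(s) = β(t,s)η(s) for all s ∈ T. In other words, all such maps η form a single equivalence class under twisting by the characters β(t,·). -/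
/-!
The quotient `χ = η' / η` of two solutions is a character of `T`, since the twisting factor
`β(a,b)` cancels. Nondegeneracy makes `t ↦ β(t,·)` an injective homomorphism from `T` into its
group of `Fˣ`-valued characters, and by Dedekind's independence of characters there are at most
`|T|` of those. So the injection is onto, and `χ = β(t,·)` for some `t`.
-/

namespace MonoidHom

section Characters

variable (G L : Type*) [Monoid G] [Field L]

theorem linearIndependent_units_comp :
    LinearIndependent L fun f : G →* Lˣ => ((Units.coeHom L).comp f : G → L) :=
  (linearIndependent_monoidHom G L).comp _ fun _ _ h =>
    MonoidHom.ext fun x => Units.ext (DFunLike.congr_fun h x)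

variable [Finite G]

theorem finite_units : Finite (G →* Lˣ) :=
  (linearIndependent_units_comp G L).finite

theorem natCard_units_le : Nat.card (G →* Lˣ) ≤ Nat.card G := by
  have := Fintype.ofFinite G
  have := finite_units G L
  have := Fintype.ofFinite (G →* Lˣ)
  simpa [Nat.card_eq_fintype_card, Module.finrank_fintype_fun_eq_card] using
    (linearIndependent_units_comp G L).fintype_card_le_finrank

variable {G L}

theorem surjective_of_injective_to_units {φ : G → (G →* Lˣ)} (hφ : Function.Injective φ) :
    Function.Surjective φ :=
  have := finite_units G L
  (hφ.bijective_of_nat_card_le (natCard_units_le G L)).surjective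

end Characters

def ofBicharacter {T M : Type*} [Group T] [CommGroup M] (β : T → T → M)
    (hβ1 : ∀ t s s', β t (s * s') = β t s * β t s')
    (hβ2 : ∀ t t' s, β (t * t') s = β t s * β t' s) : T →* T →* M :=
  MonoidHom.mk' (fun t => MonoidHom.mk' (β t) (hβ1 t)) fun t t' => MonoidHom.ext (hβ2 t t')

theorem ofBicharacter_injective {T M : Type*} [Group T] [CommGroup M] {β : T → T → M}
    (hβ1 : ∀ t s s', β t (s * s') = β t s * β t s')
    (hβ2 : ∀ t t' s, β (t * t') s = β t s * β t' s)
    (hnondeg : ∀ t : T, t ≠ 1 → ∃ s, β t s ≠ 1) :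
    Function.Injective (ofBicharacter β hβ1 hβ2) := by
  refine (injective_iff_map_eq_one _).2 fun t ht => ?_
  by_contra hne
  obtain ⟨s, hs⟩ := hnondeg t hne
  exact hs (DFunLike.congr_fun ht s)

def divOfTwisted {T M : Type*} [MulOneClass T] [CommGroup M] {c : T → T → M} (η η' : T → M)
    (hη : ∀ a b, η (a * b) = c a b * η a * η b)
    (hη' : ∀ a b, η' (a * b) = c a b * η' a * η' b) : T →* M :=
  MonoidHom.mk' (fun s => η' s / η s) fun a b => by
    rw [hη, hη', mul_assoc, mul_assoc, mul_div_mul_left_eq_div, mul_div_mul_comm]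

end MonoidHom

theorem stmt_13_general {F T : Type*} [Field F] [CommGroup T] [Fintype T]
    (β : T → T → Fˣ)
    (hβ1 : ∀ t s s', β t (s * s') = β t s * β t s')
    (hβ2 : ∀ t t' s, β (t * t') s = β t s * β t' s)
    (hnondeg : ∀ t : T, t ≠ 1 → ∃ s, β t s ≠ 1)
    (η η' : T → Fˣ)
    (hη : ∀ a b, η (a * b) = β a b * η a * η b)
    (hη' : ∀ a b, η' (a * b) = β a b * η' a * η' b) :
    ∃ t : T, ∀ s, η' s = β t s * η s := by
  obtain ⟨t, ht⟩ := MonoidHom.surjective_of_injective_to_units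
    (MonoidHom.ofBicharacter_injective hβ1 hβ2 hnondeg) (MonoidHom.divOfTwisted η η' hη hη')
  refine ⟨t, fun s => ?_⟩
  have hs : β t s = η' s / η s := DFunLike.congr_fun ht s
  rw [hs, div_mul_cancel]

/-- Let `F` be a field with `char F ≠ 2`, `T` a finite elementary
abelian `2`-group, and `β : T × T → Fˣ` a nondegenerate alternating bicharacter.
If `η, η' : T → Fˣ` both satisfy `η(ab) = β(a,b) η(a) η(b)`, then there exists `t ∈ T`
such that `η'(s) = β(t,s) η(s)` for all `s ∈ T`. -/
theorem stmt_13 {F T : Type*} [Field F] (h2 : (2 : F) ≠ 0) [CommGroup T] [Fintype T]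
    (helem : ∀ t : T, t ^ 2 = 1)
    (β : T → T → Fˣ)
    (hβ1 : ∀ t s s', β t (s * s') = β t s * β t s')
    (hβ2 : ∀ t t' s, β (t * t') s = β t s * β t' s)
    (halt : ∀ t, β t t = 1)
    (hnondeg : ∀ t : T, t ≠ 1 → ∃ s, β t s ≠ 1)
    (η η' : T → Fˣ)
    (hη : ∀ a b, η (a * b) = β a b * η a * η b)
    (hη' : ∀ a b, η' (a * b) = β a b * η' a * η' b) :
    ∃ t : T, ∀ s, η' s = β t s * η s :=
  stmt_13_general β hβ1 hβ2 hnondeg η η' hη hη'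
end

section
/- With notation as in the context, assume: T is finite; p is surjective (so T⁻ ≠ ∅); T⁺ is an elementary abelian 2-group; rad β̃ = {e, f} for some f ≠ e; t² = f for every t ∈ T⁻; and t_p ∈ T⁺ is a parity element with t_p ≠ e. Let K be a subgroup of T⁺ such that T⁺ is the internal direct product of rad β⁺ and K (i.e., (rad β⁺) ∩ K = {e} and (rad β⁺)·K = T⁺). Then the set S = {t₁ ∈ T⁻ : β̃(t₁, k) = 1 for all k ∈ K} is a coset of rad β⁺: S is nonempty, and S = t₁·(rad β⁺) for any t₁ ∈ S. -/
open Function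

theorem MonoidHom.finite_of_isDomain (G L : Type*) [Monoid G] [Fintype G] [CommRing L]
    [IsDomain L] : Finite (G →* L) :=
  (linearIndependent_monoidHom G L).finite

theorem MonoidHom.natCard_le_of_isDomain (G L : Type*) [Monoid G] [Fintype G] [CommRing L]
    [IsDomain L] : Nat.card (G →* L) ≤ Nat.card G := by
  have := MonoidHom.finite_of_isDomain G L
  have := Fintype.ofFinite (G →* L)
  simpa [Nat.card_eq_fintype_card, Module.finrank_fintype_fun_eq_card] using
    (linearIndependent_monoidHom G L).fintype_card_le_finrank

theorem MonoidHom.surjective_of_injective_units {G L : Type*} [Monoid G] [Fintype G] [CommRing L]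
    [IsDomain L] {φ : G → (G →* Lˣ)} (hφ : Injective φ) : Surjective φ := by
  have hcoe : Injective ((Units.coeHom L).comp : (G →* Lˣ) → (G →* L)) := fun χ ψ h =>
    MonoidHom.ext fun g => Units.ext (DFunLike.congr_fun h g)
  have := MonoidHom.finite_of_isDomain G L
  have : Finite (G →* Lˣ) := Finite.of_injective _ hcoe
  exact (hφ.bijective_of_nat_card_le ((Nat.card_le_card_of_injective _ hcoe).trans
    (MonoidHom.natCard_le_of_isDomain G L))).2

theorem MonoidHom.apply_swap_of_apply_self {T M : Type*} [CommGroup T] [CommGroup M]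
    (B : T →* T →* M) (halt : ∀ t, B t t = 1) (t s : T) : B s t = (B t s)⁻¹ := by
  have h := halt (t * s)
  simp only [map_mul, MonoidHom.mul_apply, halt, one_mul, mul_one] at h
  exact eq_inv_of_mul_eq_one_left h

theorem btilde_of_right_eq_zero {F T : Type*} [Field F] [CommGroup T] (β : T → T → Fˣ)
    {p : T → ZMod 2} {t s : T} (hs : p s = 0) : btilde β p t s = β t s := by
  simp [btilde, hs]

section Complement

variable {F T : Type*} [Field F] [CommGroup T] {B : T →* T →* Fˣ} {p : T → ZMod 2}
  {K : Subgroup T}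

theorem injective_restrict_of_complement_radPlus (halt : ∀ t, B t t = 1) (hK : ∀ k ∈ K, p k = 0)
    (hKrad : ∀ t ∈ radPlus (B · ·) p, t ∈ K → t = 1)
    (hKgen : ∀ t, p t = 0 → ∃ r ∈ radPlus (B · ·) p, ∃ k ∈ K, t = r * k) :
    Injective ((B.comp K.subtype).compl₂ K.subtype) := by
  refine (injective_iff_map_eq_one _).mpr fun k hk => Subtype.ext ?_
  refine hKrad k ⟨hK k k.2, fun s hs => ?_⟩ k.2
  obtain ⟨r, hr, k', hk', rfl⟩ := hKgen s hs
  have hkk' : B k k' = 1 := DFunLike.congr_fun hk ⟨k', hk'⟩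
  have hrk : B r k = 1 := hr.2 k (hK k k.2)
  change B k (r * k') = 1
  rw [map_mul, hkk', mul_one, B.apply_swap_of_apply_self halt, hrk, inv_one]

theorem exists_mem_forall_apply_eq [Finite K] (halt : ∀ t, B t t = 1) (hK : ∀ k ∈ K, p k = 0)
    (hKrad : ∀ t ∈ radPlus (B · ·) p, t ∈ K → t = 1)
    (hKgen : ∀ t, p t = 0 → ∃ r ∈ radPlus (B · ·) p, ∃ k ∈ K, t = r * k) (t : T) :
    ∃ k₀ ∈ K, ∀ k ∈ K, B k₀ k = B t k := by
  have := Fintype.ofFinite K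
  obtain ⟨k₀, hk₀⟩ := MonoidHom.surjective_of_injective_units
    (injective_restrict_of_complement_radPlus halt hK hKrad hKgen) ((B t).comp K.subtype)
  exact ⟨k₀, k₀.2, fun k hk => DFunLike.congr_fun hk₀ ⟨k, hk⟩⟩

theorem setOf_forall_apply_eq_one_eq_image_radPlus (halt : ∀ t, B t t = 1)
    (hp : ∀ a b, p (a * b) = p a + p b) (hK : ∀ k ∈ K, p k = 0)
    (hKgen : ∀ t, p t = 0 → ∃ r ∈ radPlus (B · ·) p, ∃ k ∈ K, t = r * k)
    {t₁ : T} (ht₁ : p t₁ = 1) (ht₁K : ∀ k ∈ K, B t₁ k = 1) :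
    {t | p t = 1 ∧ ∀ k ∈ K, B t k = 1} = (t₁ * ·) '' radPlus (B · ·) p := by
  ext t
  constructor
  · rintro ⟨ht, htK⟩
    have hpar : p (t₁⁻¹ * t) = 0 := by
      have h := hp t₁ (t₁⁻¹ * t)
      rwa [mul_inv_cancel_left, ht, ht₁, left_eq_add] at h
    refine ⟨t₁⁻¹ * t, ⟨hpar, fun s hs => ?_⟩, mul_inv_cancel_left t₁ t⟩
    obtain ⟨r, ⟨-, hr⟩, k, hk, rfl⟩ := hKgen s hs
    have hr' : B r (t₁⁻¹ * t) = 1 := hr _ hpar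
    change B (t₁⁻¹ * t) (r * k) = 1
    rw [map_mul, B.apply_swap_of_apply_self halt, hr', map_mul, MonoidHom.mul_apply, map_inv,
      MonoidHom.inv_apply, ht₁K k hk, htK k hk]
    simp
  · rintro ⟨r, ⟨hr0, hr⟩, rfl⟩
    refine ⟨by rw [hp, ht₁, hr0, add_zero], fun k hk => ?_⟩
    have hr' : B r k = 1 := hr k (hK k hk)
    rw [map_mul, MonoidHom.mul_apply, ht₁K k hk, hr', one_mul]

end Complement

theorem stmt_15_general {F T : Type*} [Field F] [CommGroup T] [Fintype T]
    (β : T → T → Fˣ)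
    (hβ1 : ∀ t s s', β t (s * s') = β t s * β t s')
    (hβ2 : ∀ t t' s, β (t * t') s = β t s * β t' s)
    (halt : ∀ t, β t t = 1)
    (p : T → ZMod 2) (hp : ∀ a b, p (a * b) = p a + p b)
    (hsurj : ∃ t, p t = 1)
    (K : Subgroup T) (hK : ∀ k ∈ K, p k = 0)
    (hKrad : ∀ t ∈ radPlus β p, t ∈ K → t = 1)
    (hKgen : ∀ t, p t = 0 → ∃ r ∈ radPlus β p, ∃ k ∈ K, t = r * k) :
    ({t₁ : T | p t₁ = 1 ∧ ∀ k ∈ K, btilde β p t₁ k = 1}).Nonempty ∧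
    ∀ t₁ ∈ {t₁ : T | p t₁ = 1 ∧ ∀ k ∈ K, btilde β p t₁ k = 1},
      {t₁' : T | p t₁' = 1 ∧ ∀ k ∈ K, btilde β p t₁' k = 1} =
        (fun r => t₁ * r) '' radPlus β p := by
  obtain ⟨B, rfl⟩ : ∃ B : T →* T →* Fˣ, (B · ·) = β :=
    ⟨.mk' (fun t => .mk' (β t) (hβ1 t)) fun t t' => MonoidHom.ext (hβ2 t t'), rfl⟩
  have hS : {t | p t = 1 ∧ ∀ k ∈ K, btilde (B · ·) p t k = 1} =
      {t | p t = 1 ∧ ∀ k ∈ K, B t k = 1} := by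
    refine Set.ext fun t => and_congr_right fun _ => forall₂_congr fun k hk => ?_
    rw [btilde_of_right_eq_zero _ (hK k hk)]
  rw [hS]
  refine ⟨?_, fun t₁ ⟨ht₁, ht₁K⟩ =>
    setOf_forall_apply_eq_one_eq_image_radPlus halt hp hK hKgen ht₁ ht₁K⟩
  obtain ⟨t₀, ht₀⟩ := hsurj
  obtain ⟨k₀, hk₀, hB⟩ := exists_mem_forall_apply_eq halt hK hKrad hKgen t₀
  refine ⟨t₀ * k₀⁻¹, by rw [hp, ht₀, hK _ (inv_mem hk₀), add_zero], fun k hk => ?_⟩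
  rw [map_mul, MonoidHom.mul_apply, map_inv, MonoidHom.inv_apply, hB k hk, mul_inv_cancel]

/-- Assume: `T` is finite; `p` is surjective; `T⁺` is an elementary
abelian `2`-group; `rad β̃ = {e, f}` with `f ≠ e`; `t² = f` for every `t ∈ T⁻`; and
`t_p ∈ T⁺` is a parity element with `t_p ≠ e`. Let `K ≤ T⁺` be a subgroup with
`T⁺ = (rad β⁺) × K` internally. Then `S = {t₁ ∈ T⁻ : β̃(t₁, k) = 1 for all k ∈ K}` is a
coset of `rad β⁺`: `S` is nonempty, and `S = t₁ · (rad β⁺)` for any `t₁ ∈ S`. -/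
theorem stmt_15 {F T : Type*} [Field F] (h2 : (2 : F) ≠ 0) [CommGroup T] [Fintype T]
    (β : T → T → Fˣ)
    (hβ1 : ∀ t s s', β t (s * s') = β t s * β t s')
    (hβ2 : ∀ t t' s, β (t * t') s = β t s * β t' s)
    (halt : ∀ t, β t t = 1)
    (p : T → ZMod 2) (hp : ∀ a b, p (a * b) = p a + p b)
    (hsurj : ∃ t, p t = 1)
    (helem : ∀ t, p t = 0 → t ^ 2 = 1)
    (f : T) (hf : f ≠ 1)
    (hrad : {t : T | ∀ s, btilde β p t s = 1} = {1, f})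
    (hsq : ∀ t, p t = 1 → t ^ 2 = f)
    (tp : T) (htp_plus : p tp = 0) (htp_ne : tp ≠ 1)
    (htp : ∀ t, btilde β p tp t = (-1 : Fˣ) ^ (p t).val)
    (K : Subgroup T) (hK : ∀ k ∈ K, p k = 0)
    (hKrad : ∀ t ∈ radPlus β p, t ∈ K → t = 1)
    (hKgen : ∀ t, p t = 0 → ∃ r ∈ radPlus β p, ∃ k ∈ K, t = r * k) :
    ({t₁ : T | p t₁ = 1 ∧ ∀ k ∈ K, btilde β p t₁ k = 1}).Nonempty ∧
    ∀ t₁ ∈ {t₁ : T | p t₁ = 1 ∧ ∀ k ∈ K, btilde β p t₁ k = 1},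
      {t₁' : T | p t₁' = 1 ∧ ∀ k ∈ K, btilde β p t₁' k = 1} =
        (fun r => t₁ * r) '' radPlus β p :=
  stmt_15_general β hβ1 hβ2 halt p hp hsurj K hK hKrad hKgen
end
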